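/- Let ε > 0 and let (u_n)_{n≥1} be an approximately subadditive real sequence with constant ε. Then there exist real sequences (v_n)_{n≥1} and (w_n)_{n≥1} such that u_n = v_n + w_n for all n ≥ 1, (v_n)_{n≥1} is subadditive, and 0 ≤ w_n ≤ ε for all n ≥ 1. -/

import Mathlib

/-!
Take `v n` to be the least value of `u n₁ + ⋯ + u nₖ` over all compositions `n = n₁ + ⋯ + nₖ`
(a minimum over finitely many compositions). Concatenating optimal compositions makes `v`
subadditive, the one-block composition gives `v ≤ u`, and approximate subadditivity of `u` says
exactly that `u - ε ≤ v`. Hence `w := u - v` takes values in `[0, ε]`.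
-/

open Composition

noncomputable def minBlockSum (u : ℕ → ℝ) (n : ℕ) : ℝ :=
  ⨅ c : Composition n, (c.blocks.map u).sum

section minBlockSum

variable (u : ℕ → ℝ)

theorem minBlockSum_le_blockSum {n : ℕ} (c : Composition n) :
    minBlockSum u n ≤ (c.blocks.map u).sum :=
  ciInf_le (Set.finite_range _).bddBelow c

theorem exists_blockSum_eq_minBlockSum (n : ℕ) :
    ∃ c : Composition n, (c.blocks.map u).sum = minBlockSum u n :=
  exists_eq_ciInf_of_finite

theorem minBlockSum_le_self {n : ℕ} (hn : 0 < n) : minBlockSum u n ≤ u n := by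
  simpa [single_blocks] using minBlockSum_le_blockSum u (single n hn)

theorem minBlockSum_zero_le : minBlockSum u 0 ≤ 0 := by
  simpa using minBlockSum_le_blockSum u (⟨[], by simp, rfl⟩ : Composition 0)

theorem minBlockSum_add_le (m n : ℕ) :
    minBlockSum u (m + n) ≤ minBlockSum u m + minBlockSum u n := by
  obtain ⟨c₁, hc₁⟩ := exists_blockSum_eq_minBlockSum u m
  obtain ⟨c₂, hc₂⟩ := exists_blockSum_eq_minBlockSum u n
  simpa [← hc₁, ← hc₂] using minBlockSum_le_blockSum u (c₁.append c₂)

theorem minBlockSum_sum_le (l : List ℕ) :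
    minBlockSum u l.sum ≤ (l.map (minBlockSum u)).sum := by
  induction l with
  | nil => exact minBlockSum_zero_le u
  | cons a l ih =>
    rw [List.sum_cons, List.map_cons, List.sum_cons]
    exact (minBlockSum_add_le u a l.sum).trans (add_le_add_right ih _)

theorem sub_le_minBlockSum {ε : ℝ} {n : ℕ}
    (hu : ∀ l : List ℕ, (∀ i ∈ l, 1 ≤ i) → l.sum = n → u n ≤ (l.map u).sum + ε) :
    u n - ε ≤ minBlockSum u n := by
  obtain ⟨c, hc⟩ := exists_blockSum_eq_minBlockSum u n
  have := hu c.blocks (fun _ hi => c.blocks_pos hi) c.blocks_sum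
  linarith

end minBlockSum

theorem stmt_12_general (ε : ℝ) (u : ℕ → ℝ)
    (hu : ∀ n : ℕ, 1 ≤ n → ∀ l : List ℕ, (∀ i ∈ l, 1 ≤ i) → l.sum = n →
      u n ≤ (l.map u).sum + ε) :
    ∃ v w : ℕ → ℝ,
      (∀ n : ℕ, 1 ≤ n → u n = v n + w n) ∧
      (∀ n : ℕ, 1 ≤ n → ∀ l : List ℕ, (∀ i ∈ l, 1 ≤ i) → l.sum = n →
        v n ≤ (l.map v).sum) ∧
      (∀ n : ℕ, 1 ≤ n → 0 ≤ w n ∧ w n ≤ ε) := by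
  refine ⟨minBlockSum u, fun n => u n - minBlockSum u n, fun n _ => by ring, ?_, ?_⟩
  · rintro n - l - rfl
    exact minBlockSum_sum_le u l
  · intro n hn
    have hle := minBlockSum_le_self u hn
    have hge := sub_le_minBlockSum u (hu n hn)
    constructor <;> linarith

/-- An approximately subadditive sequence (with constant ε) decomposes as the
sum of a subadditive sequence and a nonnegative sequence bounded by ε. -/
theorem stmt_12 (ε : ℝ) (hε : 0 < ε) (u : ℕ → ℝ)
    (hu : ∀ n : ℕ, 1 ≤ n → ∀ l : List ℕ, (∀ i ∈ l, 1 ≤ i) → l.sum = n →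
      u n ≤ (l.map u).sum + ε) :
    ∃ v w : ℕ → ℝ,
      (∀ n : ℕ, 1 ≤ n → u n = v n + w n) ∧
      (∀ n : ℕ, 1 ≤ n → ∀ l : List ℕ, (∀ i ∈ l, 1 ≤ i) → l.sum = n →
        v n ≤ (l.map v).sum) ∧
      (∀ n : ℕ, 1 ≤ n → 0 ≤ w n ∧ w n ≤ ε) :=
  stmt_12_general ε u hu
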